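/- arXiv:1406.0169 — 2 statements merged into one kernel-verified Lean document; each statement's English description precedes it below -/
import Mathlib

section
/- For every p ∈ ℝ³ and every unit vector ω ∈ ℝ³ one has p₀(1 + p̂·ω) = (1 + |p|² − (p·ω)²)/(p₀ − p·ω) ≥ (1 + |p×ω|²)/(2p₀). Consequently |p̂×ω|² ≤ 2(1 + p̂·ω) and 1 + p̂·ω ≥ 1/(2p₀²) (in particular 1 + p̂·ω > 0). -/
/-!
Write `S = p·ω`. Then `p₀(1 + p̂·ω) = p₀ + S`, and by Lagrange's identity
`1 + |p×ω|² = p₀² − S²`. Everything follows from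
`2p₀(p₀ + S) − (p₀² − S²) = (p₀ + S)² ≥ 0` together with `|S| ≤ |p| < p₀`.
-/

noncomputable section

open Real
open scoped RealInnerProductSpace

/-- The momentum space `ℝ³`. -/
abbrev E3 : Type := EuclideanSpace ℝ (Fin 3)

/-- `p₀ = √(1 + |p|²)`. -/
def p0 (p : E3) : ℝ := Real.sqrt (1 + ‖p‖ ^ 2)

/-- `p̂ = p / p₀`. -/
def phat (p : E3) : E3 := (p0 p)⁻¹ • p

/-- The cross product in `ℝ³`. -/
def cross3 (a b : E3) : E3 :=
  (WithLp.equiv 2 (Fin 3 → ℝ)).symm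
    ![a 1 * b 2 - a 2 * b 1, a 2 * b 0 - a 0 * b 2, a 0 * b 1 - a 1 * b 0]

theorem norm_cross3_sq (a b : E3) :
    ‖cross3 a b‖ ^ 2 = ‖a‖ ^ 2 * ‖b‖ ^ 2 - ⟪a, b⟫ ^ 2 := by
  simp [cross3, EuclideanSpace.norm_sq_eq, PiLp.inner_apply, Fin.sum_univ_three]
  ring

theorem cross3_smul_left (c : ℝ) (a b : E3) : cross3 (c • a) b = c • cross3 a b := by
  ext i
  fin_cases i <;> simp [cross3] <;> ring

theorem p0_sq (p : E3) : p0 p ^ 2 = 1 + ‖p‖ ^ 2 :=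
  Real.sq_sqrt (by positivity)

theorem p0_pos (p : E3) : 0 < p0 p :=
  Real.sqrt_pos.2 (by positivity)

theorem norm_lt_p0 (p : E3) : ‖p‖ < p0 p :=
  (Real.lt_sqrt (norm_nonneg p)).2 (by linarith)

theorem abs_inner_lt_p0 (p : E3) {ω : E3} (hω : ‖ω‖ ≤ 1) : |⟪p, ω⟫| < p0 p :=
  calc |⟪p, ω⟫| ≤ ‖p‖ * ‖ω‖ := abs_real_inner_le_norm p ω
    _ ≤ ‖p‖ := mul_le_of_le_one_right (norm_nonneg p) hω
    _ < p0 p := norm_lt_p0 p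

theorem inner_phat_left (p ω : E3) : ⟪phat p, ω⟫ = ⟪p, ω⟫ / p0 p := by
  rw [phat, real_inner_smul_left, inv_mul_eq_div]

theorem norm_cross3_phat_sq (p ω : E3) :
    ‖cross3 (phat p) ω‖ ^ 2 = ‖cross3 p ω‖ ^ 2 / p0 p ^ 2 := by
  rw [phat, cross3_smul_left, norm_smul, mul_pow, Real.norm_eq_abs, sq_abs, inv_pow,
    inv_mul_eq_div]

theorem one_add_norm_cross3_sq (p : E3) {ω : E3} (hω : ‖ω‖ = 1) :
    1 + ‖cross3 p ω‖ ^ 2 = p0 p ^ 2 - ⟪p, ω⟫ ^ 2 := by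
  rw [norm_cross3_sq, hω, p0_sq]
  ring

theorem one_add_norm_cross3_sq_le (p : E3) {ω : E3} (hω : ‖ω‖ = 1) :
    1 + ‖cross3 p ω‖ ^ 2 ≤ 2 * p0 p * (p0 p + ⟪p, ω⟫) := by
  rw [one_add_norm_cross3_sq p hω]
  nlinarith [sq_nonneg (p0 p + ⟪p, ω⟫)]

/-- For every `p ∈ ℝ³` and unit `ω ∈ ℝ³`:
`p₀(1 + p̂·ω) = (1 + |p|² − (p·ω)²)/(p₀ − p·ω) ≥ (1 + |p×ω|²)/(2p₀)`, hence
`|p̂×ω|² ≤ 2(1 + p̂·ω)`, `1 + p̂·ω ≥ 1/(2p₀²)`, and in particular `1 + p̂·ω > 0`. -/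
theorem stmt0 (p ω : E3) (hω : ‖ω‖ = 1) :
    p0 p * (1 + ⟪phat p, ω⟫) = (1 + ‖p‖ ^ 2 - ⟪p, ω⟫ ^ 2) / (p0 p - ⟪p, ω⟫) ∧
    p0 p * (1 + ⟪phat p, ω⟫) ≥ (1 + ‖cross3 p ω‖ ^ 2) / (2 * p0 p) ∧
    ‖cross3 (phat p) ω‖ ^ 2 ≤ 2 * (1 + ⟪phat p, ω⟫) ∧
    1 + ⟪phat p, ω⟫ ≥ 1 / (2 * (p0 p) ^ 2) ∧
    0 < 1 + ⟪phat p, ω⟫ := by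
  have hP := p0_pos p
  obtain ⟨hsum, hdiff⟩ := abs_lt.1 (abs_inner_lt_p0 p hω.le)
  have hkey := one_add_norm_cross3_sq_le p hω
  have hone_add : 1 + ⟪phat p, ω⟫ = (p0 p + ⟪p, ω⟫) / p0 p := by
    rw [inner_phat_left]
    field_simp
  have hmul : p0 p * (1 + ⟪phat p, ω⟫) = p0 p + ⟪p, ω⟫ := by
    rw [hone_add]
    field_simp
  refine ⟨?_, ?_, ?_, ?_, ?_⟩
  · rw [hmul, ← p0_sq, eq_div_iff (by linarith)]
    ring
  · rw [hmul, ge_iff_le, div_le_iff₀ (by positivity)]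
    linarith
  · rw [norm_cross3_phat_sq, hone_add, div_le_iff₀ (by positivity)]
    calc ‖cross3 p ω‖ ^ 2 ≤ 2 * p0 p * (p0 p + ⟪p, ω⟫) := by linarith
      _ = 2 * ((p0 p + ⟪p, ω⟫) / p0 p) * p0 p ^ 2 := by field_simp
  · rw [hone_add, ge_iff_le, div_le_div_iff₀ (by positivity) hP]
    nlinarith [sq_nonneg ‖cross3 p ω‖]
  · rw [hone_add]
    exact div_pos (by linarith) hP
end
end

section
/- Fix x ∈ ℝ³ and p ∈ ℝ³, and for y ∈ ℝ³ with y ≠ x set ω(y) = (x − y)/|x − y| and φ(y) = 1/(1 + p̂·ω(y)). There is an absolute constant C such that for all such y: |∇_y φ(y)| ≤ C / ( |x − y| (1 + p̂·ω(y))^{3/2} ) and |p̂ · ∇_y φ(y)| ≤ C / ( |x − y| (1 + p̂·ω(y)) ). -/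
/-!
Write `u = (x - y)/‖x - y‖`, `a = p̂` and `c = ⟪a, u⟫`. The chain rule gives
`∇φ(y) = (a - c u) / (‖x - y‖ (1 + c)²)`. Since `a - c u` is the component of `a` orthogonal to
the unit vector `u`, `‖a - c u‖² = ⟪a - c u, a⟫ = ‖a‖² - c² ≤ 1 - c² ≤ 2 (1 + c)`, which gives
both bounds with `C = 2`.
-/

noncomputable section

open Real MeasureTheory
open scoped RealInnerProductSpace

section InnerProductSpace

variable {E : Type*} [NormedAddCommGroup E] [InnerProductSpace ℝ E]

theorem hasFDerivAt_norm_of_ne_zero {v : E} (hv : v ≠ 0) :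
    HasFDerivAt (‖·‖) (innerSL ℝ (‖v‖⁻¹ • v)) v := by
  have h := (hasStrictFDerivAt_norm_sq v).hasFDerivAt.sqrt (by positivity)
  simp only [Real.sqrt_sq (norm_nonneg _)] at h
  refine h.congr_fderiv ?_
  ext w
  simp only [smul_apply, innerSL_apply_apply, real_inner_smul_left,
    smul_eq_mul, nsmul_eq_mul, Nat.cast_ofNat]
  field_simp

theorem hasFDerivAt_inner_normalize (a : E) {v : E} (hv : v ≠ 0) :
    HasFDerivAt (fun z => ⟪a, ‖z‖⁻¹ • z⟫)
      (innerSL ℝ (‖v‖⁻¹ • (a - ⟪a, ‖v‖⁻¹ • v⟫ • (‖v‖⁻¹ • v)))) v := by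
  have hr : ‖v‖ ≠ 0 := norm_ne_zero_iff.2 hv
  have h := ((hasDerivAt_inv hr).comp_hasFDerivAt v (hasFDerivAt_norm_of_ne_zero hv)).mul
    (innerSL ℝ a).hasFDerivAt
  simp only [Function.comp_def] at h
  refine (h.congr_of_eventuallyEq (.of_forall fun z => real_inner_smul_right _ _ _)).congr_fderiv ?_
  ext w
  simp only [add_apply, smul_apply, innerSL_apply_apply,
    real_inner_smul_left, real_inner_smul_right, inner_sub_left, smul_eq_mul]
  field_simp
  ring

theorem hasFDerivAt_inv_one_add_inner_normalize_sub (a : E) {x y : E} (hy : y ≠ x)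
    (hf : 1 + ⟪a, ‖x - y‖⁻¹ • (x - y)⟫ ≠ 0) :
    HasFDerivAt (fun z => (1 + ⟪a, ‖x - z‖⁻¹ • (x - z)⟫)⁻¹)
      (innerSL ℝ ((‖x - y‖ * (1 + ⟪a, ‖x - y‖⁻¹ • (x - y)⟫) ^ 2)⁻¹ •
        (a - ⟪a, ‖x - y‖⁻¹ • (x - y)⟫ • (‖x - y‖⁻¹ • (x - y))))) y := by
  have h := (hasFDerivAt_inner_normalize a (sub_ne_zero.2 hy.symm)).comp y
    ((hasFDerivAt_id y).const_sub x)
  refine ((hasDerivAt_inv hf).comp_hasFDerivAt y (h.const_add 1)).congr_fderiv ?_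
  ext w
  simp only [smul_apply, ContinuousLinearMap.comp_apply, neg_apply,
    ContinuousLinearMap.id_apply, innerSL_apply_apply, inner_neg_right, real_inner_smul_left,
    smul_eq_mul, mul_inv]
  ring

theorem one_add_inner_pos {a u : E} (ha : ‖a‖ < 1) (hu : ‖u‖ = 1) : 0 < 1 + ⟪a, u⟫ := by
  have := neg_le_of_abs_le ((abs_real_inner_le_norm a u).trans_eq (by rw [hu, mul_one]))
  linarith

theorem norm_sub_inner_smul_sq {a u : E} (hu : ‖u‖ = 1) :
    ‖a - ⟪a, u⟫ • u‖ ^ 2 = ‖a‖ ^ 2 - ⟪a, u⟫ ^ 2 := by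
  rw [norm_sub_sq_real, real_inner_smul_right, norm_smul, hu, Real.norm_eq_abs, mul_one,
    sq_abs]
  ring

theorem inner_sub_inner_smul_self {a u : E} (hu : ‖u‖ = 1) :
    ⟪a - ⟪a, u⟫ • u, a⟫ = ‖a - ⟪a, u⟫ • u‖ ^ 2 := by
  rw [norm_sub_inner_smul_sq hu, inner_sub_left, real_inner_self_eq_norm_sq, real_inner_smul_left,
    real_inner_comm]
  ring

theorem norm_sub_inner_smul_sq_le {a u : E} (ha : ‖a‖ ≤ 1) (hu : ‖u‖ = 1) :
    ‖a - ⟪a, u⟫ • u‖ ^ 2 ≤ 2 * (1 + ⟪a, u⟫) := by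
  have hc : |⟪a, u⟫| ≤ 1 := (abs_real_inner_le_norm a u).trans (by rwa [hu, mul_one])
  rw [norm_sub_inner_smul_sq hu]
  nlinarith [abs_le.1 hc, norm_nonneg a]

theorem norm_smul_sub_inner_smul_le {a u : E} (ha : ‖a‖ < 1) (hu : ‖u‖ = 1) {r : ℝ} (hr : 0 < r) :
    ‖(r * (1 + ⟪a, u⟫) ^ 2)⁻¹ • (a - ⟪a, u⟫ • u)‖ ≤ 2 / (r * (1 + ⟪a, u⟫) ^ ((3 : ℝ) / 2)) := by
  have hf := one_add_inner_pos ha hu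
  have hsq := norm_sub_inner_smul_sq_le ha.le hu
  set f := 1 + ⟪a, u⟫
  have hw : ‖a - ⟪a, u⟫ • u‖ ≤ 2 * √f := by
    nlinarith [Real.sq_sqrt hf.le, Real.sqrt_nonneg f, norm_nonneg (a - ⟪a, u⟫ • u)]
  have hpow : f ^ ((3 : ℝ) / 2) = f * √f := by
    rw [Real.sqrt_eq_rpow, ← Real.rpow_one_add' hf.le (by norm_num)]
    norm_num
  rw [norm_smul, Real.norm_of_nonneg (by positivity), hpow]
  calc (r * f ^ 2)⁻¹ * ‖a - ⟪a, u⟫ • u‖ ≤ (r * f ^ 2)⁻¹ * (2 * √f) := by gcongr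
    _ = 2 / (r * (f * √f)) := by
      field_simp
      rw [Real.sq_sqrt hf.le]

theorem abs_inner_smul_sub_inner_smul_le {a u : E} (ha : ‖a‖ < 1) (hu : ‖u‖ = 1) {r : ℝ}
    (hr : 0 < r) :
    |⟪(r * (1 + ⟪a, u⟫) ^ 2)⁻¹ • (a - ⟪a, u⟫ • u), a⟫| ≤ 2 / (r * (1 + ⟪a, u⟫)) := by
  have hf := one_add_inner_pos ha hu
  have hsq := norm_sub_inner_smul_sq_le ha.le hu
  rw [real_inner_smul_left, inner_sub_inner_smul_self hu, abs_of_nonneg (by positivity)]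
  calc (r * (1 + ⟪a, u⟫) ^ 2)⁻¹ * ‖a - ⟪a, u⟫ • u‖ ^ 2
      ≤ (r * (1 + ⟪a, u⟫) ^ 2)⁻¹ * (2 * (1 + ⟪a, u⟫)) := by gcongr
    _ = 2 / (r * (1 + ⟪a, u⟫)) := by field_simp

end InnerProductSpace

lemma norm_phat_lt_one (p : E3) : ‖phat p‖ < 1 := by
  have hp0 : ‖p‖ < p0 p := by
    rw [p0, Real.lt_sqrt (norm_nonneg p)]
    linarith
  rw [phat, norm_smul, norm_inv, Real.norm_of_nonneg ((norm_nonneg p).trans hp0.le),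
    inv_mul_lt_one₀ ((norm_nonneg p).trans_lt hp0)]
  exact hp0

/-- Fix `x, p ∈ ℝ³` and set `ω(y) = (x − y)/|x − y|`, `φ(y) = 1/(1 + p̂·ω(y))` for `y ≠ x`.
There is an absolute constant `C` such that for all such `y` (where `φ` is differentiable):
`|∇_y φ(y)| ≤ C/(|x − y| (1 + p̂·ω(y))^{3/2})` and
`|p̂·∇_y φ(y)| ≤ C/(|x − y| (1 + p̂·ω(y)))`. -/
theorem stmt5 :
    ∃ C : ℝ, 0 < C ∧ ∀ (x p y : E3), y ≠ x →
      DifferentiableAt ℝ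
        (fun z : E3 => (1 + ⟪phat p, ‖x - z‖⁻¹ • (x - z)⟫)⁻¹) y ∧
      ‖fderiv ℝ (fun z : E3 => (1 + ⟪phat p, ‖x - z‖⁻¹ • (x - z)⟫)⁻¹) y‖
          ≤ C / (‖x - y‖ * (1 + ⟪phat p, ‖x - y‖⁻¹ • (x - y)⟫) ^ ((3 : ℝ) / 2)) ∧
      |fderiv ℝ (fun z : E3 => (1 + ⟪phat p, ‖x - z‖⁻¹ • (x - z)⟫)⁻¹) y (phat p)|
          ≤ C / (‖x - y‖ * (1 + ⟪phat p, ‖x - y‖⁻¹ • (x - y)⟫)) := by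
  refine ⟨2, two_pos, fun x p y hy => ?_⟩
  have hxy : x - y ≠ 0 := sub_ne_zero.2 hy.symm
  have hr : 0 < ‖x - y‖ := norm_pos_iff.2 hxy
  have hu : ‖‖x - y‖⁻¹ • (x - y)‖ = 1 := norm_smul_inv_norm hxy
  have hφ := hasFDerivAt_inv_one_add_inner_normalize_sub (phat p) hy
    (one_add_inner_pos (norm_phat_lt_one p) hu).ne'
  refine ⟨hφ.differentiableAt, ?_, ?_⟩
  · rw [hφ.fderiv, innerSL_apply_norm]
    exact norm_smul_sub_inner_smul_le (norm_phat_lt_one p) hu hr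
  · rw [hφ.fderiv, innerSL_apply_apply]
    exact abs_inner_smul_sub_inner_smul_le (norm_phat_lt_one p) hu hr
end
end
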